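/- arXiv:1407.5257 — 3 statements merged into one kernel-verified Lean document; each statement's English description precedes it below -/
import Mathlib

section
/- Let z be an integer and let M be any element of SL(2,ℤ), and set a = M 0 0. Then the trace of the matrix underlying M · T_z · M⁻¹ · S_z equals 2 - a^2 * z^2. -/
/-- `Tz z` is the element of `SL(2,ℤ)` with underlying matrix `!![1, -z; 0, 1]`. -/
def Tz (z : ℤ) : Matrix.SpecialLinearGroup (Fin 2) ℤ :=
  ⟨!![1, -z; 0, 1], by simp [Matrix.det_fin_two_of]⟩

/-- `Sz z` is the element of `SL(2,ℤ)` with underlying matrix `!![1, 0; z, 1]`. -/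
def Sz (z : ℤ) : Matrix.SpecialLinearGroup (Fin 2) ℤ :=
  ⟨!![1, 0; z, 1], by simp [Matrix.det_fin_two_of]⟩

/-!
Conjugation preserves the trace, so `M T_z M⁻¹` has trace `2`. Multiplying on the right by
`S_z` adds `z` times the `(0,1)` entry to the trace. Since `T_z = 1 - z e₀ e₁ᵀ`, that entry of
`M T_z M⁻¹` is `-z` times `(M e₀)₀ (e₁ᵀ M⁻¹)₁ = a · a`, where `a = M 0 0`.
-/

open Matrix

theorem Matrix.SpecialLinearGroup.trace_conj {n R : Type*} [Fintype n] [DecidableEq n]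
    [CommRing R] (M N : Matrix.SpecialLinearGroup n R) :
    trace ((M * N * M⁻¹ : Matrix.SpecialLinearGroup n R) : Matrix n n R) =
      trace (N : Matrix n n R) := by
  rw [Matrix.SpecialLinearGroup.coe_mul, Matrix.SpecialLinearGroup.coe_mul, trace_mul_cycle,
    ← Matrix.SpecialLinearGroup.coe_mul, inv_mul_cancel, Matrix.SpecialLinearGroup.coe_one,
    one_mul]

theorem trace_Tz (z : ℤ) : trace (Tz z : Matrix (Fin 2) (Fin 2) ℤ) = 2 := by
  simp [Tz, trace_fin_two]

theorem trace_mul_Sz (X : Matrix (Fin 2) (Fin 2) ℤ) (z : ℤ) :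
    trace (X * (Sz z : Matrix (Fin 2) (Fin 2) ℤ)) = trace X + z * X 0 1 := by
  simp [Sz, trace_fin_two, mul_apply, Fin.sum_univ_two]
  ring

theorem conj_Tz_apply_zero_one (M : Matrix.SpecialLinearGroup (Fin 2) ℤ) (z : ℤ) :
    ((M * Tz z * M⁻¹ : Matrix.SpecialLinearGroup (Fin 2) ℤ) : Matrix (Fin 2) (Fin 2) ℤ) 0 1
      = -(M 0 0) ^ 2 * z := by
  simp only [Matrix.SpecialLinearGroup.coe_mul, Matrix.SpecialLinearGroup.coe_inv,
    adjugate_fin_two]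
  simp [Tz, mul_apply, Fin.sum_univ_two]
  ring

theorem stmt_3 (z : ℤ) (M : Matrix.SpecialLinearGroup (Fin 2) ℤ)
    (a : ℤ) (ha : a = (M : Matrix (Fin 2) (Fin 2) ℤ) 0 0) :
    Matrix.trace ((M * Tz z * M⁻¹ * Sz z : Matrix.SpecialLinearGroup (Fin 2) ℤ) :
        Matrix (Fin 2) (Fin 2) ℤ)
      = 2 - a ^ 2 * z ^ 2 := by
  simp only [Matrix.SpecialLinearGroup.coe_mul (M * Tz z * M⁻¹), trace_mul_Sz,
    Matrix.SpecialLinearGroup.trace_conj, trace_Tz, conj_Tz_apply_zero_one, ha]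
  ring
end

section
/- Let z be a nonzero integer and let M ∈ SL(2,ℤ). If the trace of the matrix underlying M · T_z · M⁻¹ · S_z equals the trace of the matrix underlying T_z · S_z, then M 0 0 = 1 or M 0 0 = -1. -/
theorem trace_conj_Tz_mul_Sz (z : ℤ) (M : Matrix.SpecialLinearGroup (Fin 2) ℤ) :
    Matrix.trace ((M * Tz z * M⁻¹ * Sz z : Matrix.SpecialLinearGroup (Fin 2) ℤ) :
        Matrix (Fin 2) (Fin 2) ℤ) = 2 - M 0 0 ^ 2 * z ^ 2 := by
  have hdet := M.det_coe
  rw [Matrix.det_fin_two] at hdet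
  rw [Matrix.SpecialLinearGroup.coe_mul, Matrix.SpecialLinearGroup.coe_mul,
    Matrix.SpecialLinearGroup.coe_mul, Matrix.SpecialLinearGroup.coe_inv]
  simp only [Tz, Sz, Matrix.adjugate_fin_two, Matrix.trace_fin_two, Matrix.mul_apply,
    Fin.sum_univ_two, Matrix.of_apply, Matrix.cons_val', Matrix.cons_val_fin_one,
    Matrix.cons_val_zero, Matrix.cons_val_one]
  linear_combination 2 * hdet

theorem trace_Tz_mul_Sz (z : ℤ) :
    Matrix.trace ((Tz z * Sz z : Matrix.SpecialLinearGroup (Fin 2) ℤ) :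
        Matrix (Fin 2) (Fin 2) ℤ) = 2 - z ^ 2 := by
  simpa using trace_conj_Tz_mul_Sz z 1

theorem stmt_5 (z : ℤ) (hz : z ≠ 0) (M : Matrix.SpecialLinearGroup (Fin 2) ℤ)
    (htr : Matrix.trace ((M * Tz z * M⁻¹ * Sz z : Matrix.SpecialLinearGroup (Fin 2) ℤ) :
        Matrix (Fin 2) (Fin 2) ℤ)
      = Matrix.trace ((Tz z * Sz z : Matrix.SpecialLinearGroup (Fin 2) ℤ) :
        Matrix (Fin 2) (Fin 2) ℤ)) :
    (M : Matrix (Fin 2) (Fin 2) ℤ) 0 0 = 1 ∨ (M : Matrix (Fin 2) (Fin 2) ℤ) 0 0 = -1 := by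
  rw [trace_conj_Tz_mul_Sz, trace_Tz_mul_Sz] at htr
  have hsq : M 0 0 ^ 2 = 1 :=
    mul_right_cancel₀ (pow_ne_zero 2 hz) (by linarith)
  exact sq_eq_one_iff.mp hsq
end

section
/- Let z be an integer with z ≥ 2 and let M be an element of the subgroup of SL(2,ℤ) generated by T_z and S_z. If the trace of the matrix underlying M · T_z · M⁻¹ · S_z equals the trace of the matrix underlying T_z · S_z, then there exists an integer n such that M · T_z · M⁻¹ = S_z^n · T_z · S_z^{-n}; that is, M T_z M⁻¹ is conjugate to T_z by a power of S_z. -/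
/-!
Conjugating `T_z` by `M ∈ SL(2,ℤ)` gives the transvection `1 + z v (c, -a)` along the first
column `v = (a, c)` of `M`; it depends only on `±v`. The trace of `M T_z M⁻¹ S_z` is
`2 - z² a²`, so the trace condition forces `a = ±1`. Every element of `⟨T_z, S_z⟩` lies in
`Γ₀(z)`, so `z ∣ c`, and then `±v = (1, n z)` is the first column of `S_z ^ n`.
-/

open scoped MatrixGroups
open Matrix.SpecialLinearGroup CongruenceSubgroup

lemma Sz_add (a b : ℤ) : Sz (a + b) = Sz a * Sz b := by
  ext : 1
  simp only [coe_mul]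
  simp [Sz]

lemma Sz_zero : Sz 0 = 1 := by
  ext i j
  fin_cases i <;> fin_cases j <;> simp [Sz]

lemma Sz_zpow (z n : ℤ) : Sz z ^ n = Sz (n * z) := by
  induction n using Int.induction_on with
  | zero => simp [Sz_zero]
  | succ n ih => rw [zpow_add_one, ih, add_mul, one_mul, Sz_add]
  | pred n ih =>
    rw [zpow_sub_one, ih, mul_inv_eq_iff_eq_mul, ← Sz_add]
    ring_nf

lemma Tz_mem_Gamma0 (z : ℤ) : Tz z ∈ Gamma0 z.natAbs := by
  rw [Gamma0_mem]
  simp [Tz]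

lemma Sz_mem_Gamma0 (z : ℤ) : Sz z ∈ Gamma0 z.natAbs := by
  rw [Gamma0_mem]
  simp [Sz, ZMod.intCast_zmod_eq_zero_iff_dvd]

lemma dvd_apply_one_zero_of_mem_closure {z : ℤ} {M : SL(2, ℤ)}
    (hM : M ∈ Subgroup.closure {Tz z, Sz z}) : z ∣ M 1 0 := by
  have hle : Subgroup.closure {Tz z, Sz z} ≤ Gamma0 z.natAbs := by
    rw [Subgroup.closure_le, Set.insert_subset_iff, Set.singleton_subset_iff]
    exact ⟨Tz_mem_Gamma0 z, Sz_mem_Gamma0 z⟩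
  have := Gamma0_mem.mp (hle hM)
  rwa [ZMod.intCast_zmod_eq_zero_iff_dvd, Int.natCast_natAbs, abs_dvd] at this

lemma coe_mul_Tz_mul_inv (z : ℤ) (M : SL(2, ℤ)) :
    ((M * Tz z * M⁻¹ : SL(2, ℤ)) : Matrix (Fin 2) (Fin 2) ℤ) =
      !![1 + z * (M 0 0 * M 1 0), -z * M 0 0 ^ 2; z * M 1 0 ^ 2, 1 - z * (M 0 0 * M 1 0)] := by
  have hdet : M 0 0 * M 1 1 - M 0 1 * M 1 0 = 1 := by
    rw [← Matrix.det_fin_two]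
    exact M.2
  simp only [coe_mul]
  rw [coe_inv, Matrix.eta_fin_two (M : Matrix (Fin 2) (Fin 2) ℤ), Matrix.adjugate_fin_two_of]
  ext i j
  fin_cases i <;> fin_cases j <;> simp [Tz, Matrix.mul_apply, Fin.sum_univ_two] <;> grind

lemma trace_mul_Tz_mul_inv_mul_Sz (z : ℤ) (M : SL(2, ℤ)) :
    Matrix.trace ((M * Tz z * M⁻¹ * Sz z : SL(2, ℤ)) : Matrix (Fin 2) (Fin 2) ℤ) =
      2 - z ^ 2 * M 0 0 ^ 2 := by
  rw [coe_mul, coe_mul_Tz_mul_inv, Sz, Matrix.mul_fin_two, Matrix.trace_fin_two_of]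
  ring

lemma mul_Tz_mul_inv_eq_Sz_mul_Tz_mul_inv {z m : ℤ} {M : SL(2, ℤ)} (ha : M 0 0 ^ 2 = 1)
    (hc : M 1 0 = M 0 0 * m) : M * Tz z * M⁻¹ = Sz m * Tz z * (Sz m)⁻¹ := by
  ext i j
  rw [coe_mul_Tz_mul_inv, coe_mul_Tz_mul_inv, hc]
  fin_cases i <;> fin_cases j <;> simp [Sz] <;> grind

theorem stmt_8 (z : ℤ) (hz : 2 ≤ z) (M : Matrix.SpecialLinearGroup (Fin 2) ℤ)
    (hM : M ∈ Subgroup.closure {Tz z, Sz z})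
    (htr : Matrix.trace ((M * Tz z * M⁻¹ * Sz z : Matrix.SpecialLinearGroup (Fin 2) ℤ) :
        Matrix (Fin 2) (Fin 2) ℤ)
      = Matrix.trace ((Tz z * Sz z : Matrix.SpecialLinearGroup (Fin 2) ℤ) :
        Matrix (Fin 2) (Fin 2) ℤ)) :
    ∃ n : ℤ, M * Tz z * M⁻¹ = Sz z ^ n * Tz z * Sz z ^ (-n) := by
  have ha : M 0 0 ^ 2 = 1 := by
    have hz2 : z ^ 2 ≠ 0 := pow_ne_zero 2 (by omega)
    have htrTS := trace_mul_Tz_mul_inv_mul_Sz z 1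
    simp only [one_mul, inv_one, mul_one, coe_one, Matrix.one_apply_eq, one_pow] at htrTS
    rw [trace_mul_Tz_mul_inv_mul_Sz, htrTS] at htr
    simpa [hz2] using htr
  obtain ⟨k, hk⟩ := dvd_apply_one_zero_of_mem_closure hM
  refine ⟨M 0 0 * k, ?_⟩
  rw [zpow_neg, Sz_zpow]
  exact mul_Tz_mul_inv_eq_Sz_mul_Tz_mul_inv ha (by linear_combination hk - k * z * ha)
end
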